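/- Let (P, 𝓛) be a thick generalized quadrangle in which every point lies on at least 4 lines. Let L₁, L₂ ∈ 𝓛 and let S := {J ∈ 𝓛 | J ∩ L₁ = ∅ and J ∩ L₂ = ∅} be the set of lines opposite both L₁ and L₂ (in a generalized quadrangle two lines are opposite exactly when they are disjoint). Then the concurrency graph on S is connected: for all J, J' ∈ S there exist n ∈ ℕ and lines J = J₀, J₁, …, J_n = J' in S with Jᵢ ∩ Jᵢ₊₁ ≠ ∅ for every i < n. -/

import Mathlib

/-!
Take `p ∈ J` and let `M` join `p` to its projection `q` on `J'`. If `M ∈ S` we are done;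
otherwise `M` meets, say, `L₁` in a point `y`. As `y` is on at least four lines, some line
`G ∋ y` differs from `L₁`, `L₂`, `M`, and it carries a point `g ≠ y` off `L₂`. Since there are
no triangles, `g` is not collinear with `p`. Project `g` onto two lines of `S` through `p`: the
two projecting lines through `g` are distinct, neither meets `L₁` (the only line through `g`
meeting `L₁` is `G`), and they cannot both meet `L₂`; so one lies in `S`. Thus `p`, and likewise
`q`, is joined inside `S` to a line through `g`.
-/

/-- Two points of a point-line geometry `(P, 𝓛)` are collinear if some line contains both. -/
def GeomCollinear {P : Type*} (𝓛 : Set (Set P)) (p q : P) : Prop :=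
  ∃ l ∈ 𝓛, p ∈ l ∧ q ∈ l

section

variable {P : Type*}

theorem GeomCollinear.symm {𝓛 : Set (Set P)} {p q : P} (h : GeomCollinear 𝓛 p q) :
    GeomCollinear 𝓛 q p :=
  let ⟨l, hl, hp, hq⟩ := h
  ⟨l, hl, hq, hp⟩

theorem Set.lt_encard_diff_of_encard_add_lt {α : Type*} {s t : Set α} {k : ℕ∞}
    (h : t.encard + k < s.encard) : k < (s \ t).encard := by
  by_contra! hk
  refine h.not_ge ?_
  calc s.encard ≤ (s \ t).encard + t.encard := s.encard_le_encard_sdiff_add_encard t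
    _ ≤ t.encard + k := by rw [add_comm]; gcongr

/-- The incidence axioms of a generalized quadrangle, without thickness. -/
structure IsWeakGeneralizedQuadrangle (𝓛 : Set (Set P)) : Prop where
  eq_of_mem_of_mem : ∀ p q : P, p ≠ q → ∀ l₁ ∈ 𝓛, ∀ l₂ ∈ 𝓛,
    p ∈ l₁ → q ∈ l₁ → p ∈ l₂ → q ∈ l₂ → l₁ = l₂
  existsUnique_collinear : ∀ p : P, ∀ l ∈ 𝓛, p ∉ l → ∃! q : P, q ∈ l ∧ GeomCollinear 𝓛 p q

def oppositeLines (𝓛 : Set (Set P)) (L₁ L₂ : Set P) : Set (Set P) :=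
  {J ∈ 𝓛 | J ∩ L₁ = ∅ ∧ J ∩ L₂ = ∅}

def concurrencyGraph (S : Set (Set P)) : SimpleGraph S where
  Adj A B := A ≠ B ∧ ((A : Set P) ∩ B).Nonempty
  symm := ⟨fun _ _ h => ⟨h.1.symm, Set.inter_comm (α := P) _ _ ▸ h.2⟩⟩
  loopless := ⟨fun _ h => h.1 rfl⟩

theorem concurrencyGraph.reachable_of_inter_nonempty {S : Set (Set P)} {A B : S}
    (h : ((A : Set P) ∩ B).Nonempty) : (concurrencyGraph S).Reachable A B := by
  by_cases hAB : A = B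
  · exact hAB ▸ SimpleGraph.Reachable.refl A
  · exact SimpleGraph.Adj.reachable (show _ ∧ _ from ⟨hAB, h⟩)

section oppositeLines

variable {𝓛 : Set (Set P)} {L₁ L₂ J : Set P} {p : P}

theorem oppositeLines_comm : oppositeLines 𝓛 L₁ L₂ = oppositeLines 𝓛 L₂ L₁ := by
  ext J
  simp only [oppositeLines, Set.mem_ofPred_eq, and_comm]

theorem notMem_left_of_mem_oppositeLines (hJ : J ∈ oppositeLines 𝓛 L₁ L₂) (hp : p ∈ J) :
    p ∉ L₁ :=
  fun h => Set.notMem_empty p (hJ.2.1 ▸ ⟨hp, h⟩)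

theorem notMem_right_of_mem_oppositeLines (hJ : J ∈ oppositeLines 𝓛 L₁ L₂) (hp : p ∈ J) :
    p ∉ L₂ :=
  fun h => Set.notMem_empty p (hJ.2.2 ▸ ⟨hp, h⟩)

theorem inter_right_nonempty_of_notMem_oppositeLines (hJ : J ∈ 𝓛) (hJL₁ : J ∩ L₁ = ∅)
    (h : J ∉ oppositeLines 𝓛 L₁ L₂) : (J ∩ L₂).Nonempty :=
  Set.nonempty_iff_ne_empty.mpr fun hJL₂ => h ⟨hJ, hJL₁, hJL₂⟩

end oppositeLines

namespace IsWeakGeneralizedQuadrangle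

variable {𝓛 : Set (Set P)} {L₁ L₂ : Set P}

theorem eq_of_collinear (hQ : IsWeakGeneralizedQuadrangle 𝓛) {l : Set P} (hl : l ∈ 𝓛)
    {p q q' : P} (hp : p ∉ l) (hq : q ∈ l) (hq' : q' ∈ l)
    (hpq : GeomCollinear 𝓛 p q) (hpq' : GeomCollinear 𝓛 p q') : q = q' :=
  (hQ.existsUnique_collinear p l hl hp).unique ⟨hq, hpq⟩ ⟨hq', hpq'⟩

theorem eq_of_inter_nonempty (hQ : IsWeakGeneralizedQuadrangle 𝓛) {L N N' : Set P}
    (hL : L ∈ 𝓛) (hN : N ∈ 𝓛) (hN' : N' ∈ 𝓛) {g : P} (hg : g ∉ L) (hgN : g ∈ N) (hgN' : g ∈ N')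
    (hNL : (N ∩ L).Nonempty) (hN'L : (N' ∩ L).Nonempty) : N = N' := by
  obtain ⟨f, hfN, hfL⟩ := hNL
  obtain ⟨f', hf'N', hf'L⟩ := hN'L
  obtain rfl : f = f' := hQ.eq_of_collinear hL hg hfL hf'L ⟨N, hN, hgN, hfN⟩ ⟨N', hN', hgN', hf'N'⟩
  exact hQ.eq_of_mem_of_mem g f (fun h => hg (h ▸ hfL)) N hN N' hN' hgN hfN hgN' hf'N'

/-- There are no triangles. -/
theorem mem_of_collinear_of_collinear (hQ : IsWeakGeneralizedQuadrangle 𝓛) {G : Set P}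
    (hG : G ∈ 𝓛) {g y z : P} (hgG : g ∈ G) (hyG : y ∈ G) (hgy : g ≠ y)
    (hzg : GeomCollinear 𝓛 z g) (hzy : GeomCollinear 𝓛 z y) : z ∈ G := by
  obtain ⟨N, hN, hzN, hgN⟩ := hzg
  by_cases hyN : y ∈ N
  · exact hQ.eq_of_mem_of_mem g y hgy N hN G hG hgN hyN hgG hyG ▸ hzN
  · rwa [hQ.eq_of_collinear hN hyN hzN hgN hzy.symm ⟨G, hG, hyG, hgG⟩]

theorem exists_two_mem_oppositeLines (hQ : IsWeakGeneralizedQuadrangle 𝓛)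
    (hpoint4 : ∀ p : P, 4 ≤ {l ∈ 𝓛 | p ∈ l}.encard) (hL₁ : L₁ ∈ 𝓛) (hL₂ : L₂ ∈ 𝓛)
    {z : P} (hz₁ : z ∉ L₁) (hz₂ : z ∉ L₂) :
    ∃ B₁ ∈ oppositeLines 𝓛 L₁ L₂, ∃ B₂ ∈ oppositeLines 𝓛 L₁ L₂, B₁ ≠ B₂ ∧ z ∈ B₁ ∧ z ∈ B₂ := by
  have meeting_le_one : ∀ {L}, L ∈ 𝓛 → z ∉ L →
      {l ∈ 𝓛 | z ∈ l ∧ (l ∩ L).Nonempty}.encard ≤ 1 := fun hL hz =>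
    Set.encard_le_one_iff.mpr fun _ _ ha hb =>
      hQ.eq_of_inter_nonempty hL ha.1 hb.1 hz ha.2.1 hb.2.1 ha.2.2 hb.2.2
  set bad := {l ∈ 𝓛 | z ∈ l ∧ (l ∩ L₁).Nonempty} ∪ {l ∈ 𝓛 | z ∈ l ∧ (l ∩ L₂).Nonempty}
  have hbad : bad.encard + 1 < {l ∈ 𝓛 | z ∈ l}.encard :=
    calc bad.encard + 1 ≤ 1 + 1 + 1 := by
          gcongr
          exact (Set.encard_union_le _ _).trans
            (add_le_add (meeting_le_one hL₁ hz₁) (meeting_le_one hL₂ hz₂))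
      _ < 4 := by norm_num
      _ ≤ _ := hpoint4 z
  have mem_opposite : ∀ B ∈ {l ∈ 𝓛 | z ∈ l} \ bad, B ∈ oppositeLines 𝓛 L₁ L₂ := by
    rintro B ⟨⟨hB, hzB⟩, hBbad⟩
    simp only [bad, Set.mem_union, Set.mem_sep_iff, not_or, not_and, hB, hzB, true_implies,
      Set.not_nonempty_iff_eq_empty] at hBbad
    exact ⟨hB, hBbad⟩
  obtain ⟨B₁, B₂, hB₁, hB₂, hne⟩ :=
    Set.one_lt_encard_iff.mp (Set.lt_encard_diff_of_encard_add_lt hbad)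
  exact ⟨B₁, mem_opposite B₁ hB₁, B₂, mem_opposite B₂ hB₂, hne, hB₁.1.2, hB₂.1.2⟩

theorem exists_concurrent_mem_oppositeLines (hQ : IsWeakGeneralizedQuadrangle 𝓛)
    (hpoint4 : ∀ p : P, 4 ≤ {l ∈ 𝓛 | p ∈ l}.encard) (hL₁ : L₁ ∈ 𝓛) (hL₂ : L₂ ∈ 𝓛)
    {G : Set P} {y g z : P} (hG : G ∈ 𝓛) (hGL₁ : G ≠ L₁) (hyG : y ∈ G) (hyL₁ : y ∈ L₁)
    (hgG : g ∈ G) (hgy : g ≠ y) (hgL₂ : g ∉ L₂)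
    (hz₁ : z ∉ L₁) (hz₂ : z ∉ L₂) (hzG : z ∉ G) (hzy : GeomCollinear 𝓛 z y) :
    ∃ B ∈ oppositeLines 𝓛 L₁ L₂, ∃ T ∈ oppositeLines 𝓛 L₁ L₂,
      z ∈ B ∧ g ∈ T ∧ (B ∩ T).Nonempty := by
  have hgL₁ : g ∉ L₁ := fun h => hGL₁ (hQ.eq_of_mem_of_mem g y hgy G hG L₁ hL₁ hgG hyG h hyL₁)
  have hgz : ¬ GeomCollinear 𝓛 g z := fun h =>
    hzG (hQ.mem_of_collinear_of_collinear hG hgG hyG hgy h.symm hzy)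
  -- A line through `g` meeting `L₁` is `G`; it cannot also meet `B`, since `y ∉ B` would then
  -- be collinear with two points of `B`.
  have projection : ∀ B ∈ oppositeLines 𝓛 L₁ L₂, z ∈ B →
      ∃ T ∈ 𝓛, ∃ b ∈ B, g ∈ T ∧ b ∈ T ∧ T ∩ L₁ = ∅ := by
    intro B hB hzB
    obtain ⟨b, ⟨hbB, T, hT, hgT, hbT⟩, -⟩ :=
      hQ.existsUnique_collinear g B hB.1 fun h => hgz ⟨B, hB.1, h, hzB⟩
    refine ⟨T, hT, b, hbB, hgT, hbT, Set.not_nonempty_iff_eq_empty.mp fun hTL₁ => hzG ?_⟩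
    obtain rfl : T = G := hQ.eq_of_inter_nonempty hL₁ hT hG hgL₁ hgT hgG hTL₁ ⟨y, hyG, hyL₁⟩
    have hyB : y ∉ B := fun h => notMem_left_of_mem_oppositeLines hB h hyL₁
    rwa [hQ.eq_of_collinear hB.1 hyB hzB hbB hzy.symm ⟨T, hT, hyG, hbT⟩]
  obtain ⟨B₁, hB₁, B₂, hB₂, hB₁₂, hzB₁, hzB₂⟩ :=
    hQ.exists_two_mem_oppositeLines hpoint4 hL₁ hL₂ hz₁ hz₂
  obtain ⟨T₁, hT₁, b₁, hb₁, hgT₁, hbT₁, hT₁L₁⟩ := projection B₁ hB₁ hzB₁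
  obtain ⟨T₂, hT₂, b₂, hb₂, hgT₂, hbT₂, hT₂L₁⟩ := projection B₂ hB₂ hzB₂
  by_cases hT₁O : T₁ ∈ oppositeLines 𝓛 L₁ L₂
  · exact ⟨B₁, hB₁, T₁, hT₁O, hzB₁, hgT₁, b₁, hb₁, hbT₁⟩
  by_cases hT₂O : T₂ ∈ oppositeLines 𝓛 L₁ L₂
  · exact ⟨B₂, hB₂, T₂, hT₂O, hzB₂, hgT₂, b₂, hb₂, hbT₂⟩
  have hT₁₂ : T₁ ≠ T₂ := by
    rintro rfl
    have hzT₁ : z ∉ T₁ := fun h => hgz ⟨T₁, hT₁, hgT₁, h⟩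
    obtain rfl : b₁ = b₂ :=
      hQ.eq_of_collinear hT₁ hzT₁ hbT₁ hbT₂ ⟨B₁, hB₁.1, hzB₁, hb₁⟩ ⟨B₂, hB₂.1, hzB₂, hb₂⟩
    exact hB₁₂ (hQ.eq_of_mem_of_mem z b₁ (fun h => hzT₁ (h ▸ hbT₁)) B₁ hB₁.1 B₂ hB₂.1
      hzB₁ hb₁ hzB₂ hb₂)
  exact absurd (hQ.eq_of_inter_nonempty hL₂ hT₁ hT₂ hgL₂ hgT₁ hgT₂
    (inter_right_nonempty_of_notMem_oppositeLines hT₁ hT₁L₁ hT₁O)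
    (inter_right_nonempty_of_notMem_oppositeLines hT₂ hT₂L₁ hT₂O)) hT₁₂

theorem exists_line_and_point_off (hQ : IsWeakGeneralizedQuadrangle 𝓛)
    (hline3 : ∀ l ∈ 𝓛, 3 ≤ l.encard) (hpoint4 : ∀ p : P, 4 ≤ {l ∈ 𝓛 | p ∈ l}.encard)
    (hL₂ : L₂ ∈ 𝓛) (y : P) (M : Set P) :
    ∃ G ∈ 𝓛, ∃ g ∈ G, y ∈ G ∧ G ≠ L₁ ∧ G ≠ M ∧ g ≠ y ∧ g ∉ L₂ := by
  obtain ⟨G, ⟨hG, hyG⟩, hGne⟩ : ({l ∈ 𝓛 | y ∈ l} \ {L₁, L₂, M}).Nonempty := by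
    refine Set.encard_pos.mp (Set.lt_encard_diff_of_encard_add_lt ?_)
    calc ({L₁, L₂, M} : Set (Set P)).encard + 0 ≤ ({M} : Set (Set P)).encard + 1 + 1 := by
          rw [add_zero]
          exact (Set.encard_insert_le _ _).trans (by gcongr; exact Set.encard_insert_le _ _)
      _ < 4 := by rw [Set.encard_singleton]; norm_num
      _ ≤ _ := hpoint4 y
  simp only [Set.mem_insert_iff, Set.mem_singleton_iff, not_or] at hGne
  obtain ⟨hGL₁, hGL₂, hGM⟩ := hGne
  obtain ⟨g, hgG, hgne⟩ : (G \ insert y (G ∩ L₂)).Nonempty := by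
    have hGL₂ : (G ∩ L₂).encard ≤ 1 := Set.encard_le_one_iff.mpr fun a b ha hb => by
      by_contra hab
      exact hGL₂ (hQ.eq_of_mem_of_mem a b hab G hG L₂ hL₂ ha.1 hb.1 ha.2 hb.2)
    refine Set.encard_pos.mp (Set.lt_encard_diff_of_encard_add_lt ?_)
    calc (insert y (G ∩ L₂)).encard + 0 ≤ 1 + 1 := by
          rw [add_zero]
          exact (Set.encard_insert_le _ _).trans (by gcongr)
      _ < 3 := by norm_num
      _ ≤ _ := hline3 G hG
  simp only [Set.mem_insert_iff, Set.mem_inter_iff, not_or, hgG, true_and] at hgne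
  exact ⟨G, hG, g, hgG, hyG, hGL₁, hGM, hgne⟩

theorem exists_reachable_of_mem_line (hQ : IsWeakGeneralizedQuadrangle 𝓛)
    (hline3 : ∀ l ∈ 𝓛, 3 ≤ l.encard) (hpoint4 : ∀ p : P, 4 ≤ {l ∈ 𝓛 | p ∈ l}.encard)
    (hL₁ : L₁ ∈ 𝓛) (hL₂ : L₂ ∈ 𝓛) {M : Set P} (hM : M ∈ 𝓛) (hML₁ : (M ∩ L₁).Nonempty)
    {z w : P} (hzM : z ∈ M) (hwM : w ∈ M)
    (hz₁ : z ∉ L₁) (hz₂ : z ∉ L₂) (hw₁ : w ∉ L₁) (hw₂ : w ∉ L₂) :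
    ∃ B C : oppositeLines 𝓛 L₁ L₂, z ∈ (B : Set P) ∧ w ∈ (C : Set P) ∧
      (concurrencyGraph (oppositeLines 𝓛 L₁ L₂)).Reachable B C := by
  obtain ⟨y, hyM, hyL₁⟩ := hML₁
  obtain ⟨G, hG, g, hgG, hyG, hGL₁, hGM, hgy, hgL₂⟩ :=
    hQ.exists_line_and_point_off hline3 hpoint4 (L₁ := L₁) hL₂ y M
  have off_G : ∀ x ∈ M, x ∉ L₁ → x ∉ G := fun x hxM hx₁ hxG =>
    hGM (hQ.eq_of_mem_of_mem x y (fun h => hx₁ (h ▸ hyL₁)) G hG M hM hxG hyG hxM hyM)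
  obtain ⟨B, hB, T, hT, hzB, hgT, hBT⟩ := hQ.exists_concurrent_mem_oppositeLines hpoint4 hL₁ hL₂
    hG hGL₁ hyG hyL₁ hgG hgy hgL₂ hz₁ hz₂ (off_G z hzM hz₁) ⟨M, hM, hzM, hyM⟩
  obtain ⟨C, hC, T', hT', hwC, hgT', hCT'⟩ := hQ.exists_concurrent_mem_oppositeLines hpoint4 hL₁
    hL₂ hG hGL₁ hyG hyL₁ hgG hgy hgL₂ hw₁ hw₂ (off_G w hwM hw₁) ⟨M, hM, hwM, hyM⟩
  refine ⟨⟨B, hB⟩, ⟨C, hC⟩, hzB, hwC, ?_⟩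
  exact ((concurrencyGraph.reachable_of_inter_nonempty (B := ⟨T, hT⟩) hBT).trans
    (concurrencyGraph.reachable_of_inter_nonempty (B := ⟨T', hT'⟩) ⟨g, hgT, hgT'⟩)).trans
    (concurrencyGraph.reachable_of_inter_nonempty hCT').symm

theorem concurrencyGraph_oppositeLines_preconnected (hQ : IsWeakGeneralizedQuadrangle 𝓛)
    (hline3 : ∀ l ∈ 𝓛, 3 ≤ l.encard) (hpoint4 : ∀ p : P, 4 ≤ {l ∈ 𝓛 | p ∈ l}.encard)
    (hL₁ : L₁ ∈ 𝓛) (hL₂ : L₂ ∈ 𝓛) :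
    (concurrencyGraph (oppositeLines 𝓛 L₁ L₂)).Preconnected := by
  rintro ⟨J, hJ⟩ ⟨J', hJ'⟩
  obtain ⟨p, hpJ⟩ : J.Nonempty :=
    Set.encard_pos.mp ((by norm_num : (0 : ℕ∞) < 3).trans_le (hline3 J hJ.1))
  by_cases hpJ' : p ∈ J'
  · exact concurrencyGraph.reachable_of_inter_nonempty ⟨p, hpJ, hpJ'⟩
  obtain ⟨q, ⟨hqJ', M, hM, hpM, hqM⟩, -⟩ := hQ.existsUnique_collinear p J' hJ'.1 hpJ'
  suffices ∃ B C : oppositeLines 𝓛 L₁ L₂, p ∈ (B : Set P) ∧ q ∈ (C : Set P) ∧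
      (concurrencyGraph (oppositeLines 𝓛 L₁ L₂)).Reachable B C by
    obtain ⟨B, C, hpB, hqC, hBC⟩ := this
    exact ((concurrencyGraph.reachable_of_inter_nonempty ⟨p, hpJ, hpB⟩).trans hBC).trans
      (concurrencyGraph.reachable_of_inter_nonempty ⟨q, hqC, hqJ'⟩)
  by_cases hMO : M ∈ oppositeLines 𝓛 L₁ L₂
  · exact ⟨⟨M, hMO⟩, ⟨M, hMO⟩, hpM, hqM, .refl _⟩
  have hp₁ := notMem_left_of_mem_oppositeLines hJ hpJ
  have hp₂ := notMem_right_of_mem_oppositeLines hJ hpJ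
  have hq₁ := notMem_left_of_mem_oppositeLines hJ' hqJ'
  have hq₂ := notMem_right_of_mem_oppositeLines hJ' hqJ'
  by_cases hML₁ : M ∩ L₁ = ∅
  · have hML₂ := inter_right_nonempty_of_notMem_oppositeLines hM hML₁ hMO
    have := hQ.exists_reachable_of_mem_line hline3 hpoint4 hL₂ hL₁ hM hML₂ hpM hqM hp₂ hp₁ hq₂ hq₁
    rwa [oppositeLines_comm] at this
  · exact hQ.exists_reachable_of_mem_line hline3 hpoint4 hL₁ hL₂ hM
      (Set.nonempty_iff_ne_empty.mpr hML₁) hpM hqM hp₁ hp₂ hq₁ hq₂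

end IsWeakGeneralizedQuadrangle

end

theorem GQ_lines_opposite_two_lines_connected_general
    {P : Type*} (𝓛 : Set (Set P))
    -- thick generalized quadrangle axioms
    (hline3 : ∀ l ∈ 𝓛, 3 ≤ l.encard)
    (hunique : ∀ p q : P, p ≠ q → ∀ l₁ ∈ 𝓛, ∀ l₂ ∈ 𝓛,
      p ∈ l₁ → q ∈ l₁ → p ∈ l₂ → q ∈ l₂ → l₁ = l₂)
    (hGQ : ∀ p : P, ∀ l ∈ 𝓛, p ∉ l → ∃! q : P, q ∈ l ∧ GeomCollinear 𝓛 p q)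
    -- every point lies on at least 4 lines
    (hpoint4 : ∀ p : P, 4 ≤ {l ∈ 𝓛 | p ∈ l}.encard)
    (L₁ L₂ : Set P) (hL₁ : L₁ ∈ 𝓛) (hL₂ : L₂ ∈ 𝓛)
    (S : Set (Set P))
    (hS : S = {J ∈ 𝓛 | J ∩ L₁ = ∅ ∧ J ∩ L₂ = ∅}) :
    ∀ J ∈ S, ∀ J' ∈ S, ∃ (n : ℕ) (Js : ℕ → Set P),
      Js 0 = J ∧ Js n = J' ∧ (∀ i ≤ n, Js i ∈ S) ∧
      ∀ i < n, (Js i ∩ Js (i + 1)).Nonempty := by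
  intro J hJ J' hJ'
  subst hS
  obtain ⟨w⟩ := IsWeakGeneralizedQuadrangle.concurrencyGraph_oppositeLines_preconnected
    ⟨hunique, hGQ⟩ hline3 hpoint4 hL₁ hL₂ ⟨J, hJ⟩ ⟨J', hJ'⟩
  exact ⟨w.length, fun i => w.getVert i, by simp, by simp, fun i _ => (w.getVert i).2,
    fun i hi => (w.adj_getVert_succ hi).2⟩

/-- In a thick generalized quadrangle with at least `4` lines per point,
the concurrency graph on the set `S` of lines opposite (i.e. disjoint from) two given lines
`L₁, L₂` is connected. -/
theorem GQ_lines_opposite_two_lines_connected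
    {P : Type*} (𝓛 : Set (Set P))
    -- thick generalized quadrangle axioms
    (hline3 : ∀ l ∈ 𝓛, 3 ≤ l.encard)
    (hpoint3 : ∀ p : P, 3 ≤ {l ∈ 𝓛 | p ∈ l}.encard)
    (hunique : ∀ p q : P, p ≠ q → ∀ l₁ ∈ 𝓛, ∀ l₂ ∈ 𝓛,
      p ∈ l₁ → q ∈ l₁ → p ∈ l₂ → q ∈ l₂ → l₁ = l₂)
    (hGQ : ∀ p : P, ∀ l ∈ 𝓛, p ∉ l → ∃! q : P, q ∈ l ∧ GeomCollinear 𝓛 p q)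
    -- every point lies on at least 4 lines
    (hpoint4 : ∀ p : P, 4 ≤ {l ∈ 𝓛 | p ∈ l}.encard)
    (L₁ L₂ : Set P) (hL₁ : L₁ ∈ 𝓛) (hL₂ : L₂ ∈ 𝓛)
    (S : Set (Set P))
    (hS : S = {J ∈ 𝓛 | J ∩ L₁ = ∅ ∧ J ∩ L₂ = ∅}) :
    ∀ J ∈ S, ∀ J' ∈ S, ∃ (n : ℕ) (Js : ℕ → Set P),
      Js 0 = J ∧ Js n = J' ∧ (∀ i ≤ n, Js i ∈ S) ∧
      ∀ i < n, (Js i ∩ Js (i + 1)).Nonempty :=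
  GQ_lines_opposite_two_lines_connected_general 𝓛 hline3 hunique hGQ hpoint4 L₁ L₂ hL₁ hL₂ S hS
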